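/- arXiv:1410.3718 — 2 statements merged into one kernel-verified Lean document; each statement's English description precedes it below -/
import Mathlib

section
/- The Peregrine breather u_Per(x,t) := (1 − 4(1 + 4it)/(1 + 4x² + 16t²)) · exp(2it) satisfies the focusing cubic nonlinear Schrödinger equation i ∂ₜu_Per(x,t) + ∂ₓₓu_Per(x,t) + 2|u_Per(x,t)|² u_Per(x,t) = 0 for all (x,t) ∈ ℝ × ℝ. -/
/-!
Write `u_Per = v · e^{2it}` with the rational profile `v = 1 - 4(1+4it)/D`,
`D = 1 + 4x² + 16t²`. The phase has modulus one and contributes `i · 2i · v = -2v` to `i ∂ₜu`,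
so the equation for `u_Per` is equivalent to `i ∂ₜv + ∂ₓₓv + 2|v|²v = 2v`. Since
`|v|² = v · v̄` with `v̄ = 1 - 4(1-4it)/D`, the latter is a rational identity in `x` and `t`;
after clearing the denominator `D³` it is a polynomial identity modulo `i² = -1`.
-/

open Complex

noncomputable section

def nlsResidual (u : ℝ → ℝ → ℂ) (x t : ℝ) : ℂ :=
  I * deriv (fun τ => u x τ) t + deriv (deriv fun ξ => u ξ t) x + 2 * (‖u x t‖ : ℂ) ^ 2 * u x t

theorem nlsResidual_mul_phase (v : ℝ → ℝ → ℂ) (ω x t : ℝ)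
    (hv : DifferentiableAt ℝ (fun τ => v x τ) t) :
    nlsResidual (fun x t => v x t * exp (↑(ω * t) * I)) x t
      = (nlsResidual v x t - ω * v x t) * exp (↑(ω * t) * I) := by
  have hphase : HasDerivAt (fun τ : ℝ => exp (↑(ω * τ) * I)) (exp (↑(ω * t) * I) * (ω * I)) t := by
    simpa using (((hasDerivAt_id t).const_mul ω).ofReal_comp.mul_const I).cexp
  have hdt : deriv (fun τ => v x τ * exp (↑(ω * τ) * I)) t
      = deriv (fun τ => v x τ) t * exp (↑(ω * t) * I) + v x t * (exp (↑(ω * t) * I) * (ω * I)) :=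
    (hv.hasDerivAt.mul hphase).deriv
  simp only [nlsResidual, deriv_mul_const_field', hdt, norm_mul, norm_exp_ofReal_mul_I, mul_one]
  linear_combination v x t * exp (↑(ω * t) * I) * ω * I_mul_I

def peregrineProfile (x t : ℝ) : ℂ :=
  1 - 4 * (1 + 4 * I * t) / (1 + 4 * (x : ℂ) ^ 2 + 16 * (t : ℂ) ^ 2)

theorem peregrine_denom_ne_zero (x t : ℝ) : 1 + 4 * (x : ℂ) ^ 2 + 16 * (t : ℂ) ^ 2 ≠ 0 := by
  norm_cast; positivity

theorem hasDerivAt_peregrine_denom_x (x t : ℝ) :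
    HasDerivAt (fun ξ : ℝ => 1 + 4 * (ξ : ℂ) ^ 2 + 16 * (t : ℂ) ^ 2) (8 * (x : ℂ)) x := by
  refine ((((hasDerivAt_pow 2 (x : ℂ)).const_mul 4).const_add 1).add_const _).comp_ofReal
    |>.congr_deriv ?_
  simp only [Nat.cast_ofNat, Nat.add_one_sub_one, pow_one]
  ring

theorem hasDerivAt_peregrine_denom_t (x t : ℝ) :
    HasDerivAt (fun τ : ℝ => 1 + 4 * (x : ℂ) ^ 2 + 16 * (τ : ℂ) ^ 2) (32 * (t : ℂ)) t := by
  refine (((hasDerivAt_pow 2 (t : ℂ)).const_mul 16).const_add _).comp_ofReal.congr_deriv ?_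
  simp only [Nat.cast_ofNat, Nat.add_one_sub_one, pow_one]
  ring

theorem hasDerivAt_peregrineProfile_x (x t : ℝ) :
    HasDerivAt (fun ξ => peregrineProfile ξ t)
      (32 * (1 + 4 * I * t) * x / (1 + 4 * (x : ℂ) ^ 2 + 16 * (t : ℂ) ^ 2) ^ 2) x := by
  refine ((hasDerivAt_const x 1).sub ((hasDerivAt_const x (4 * (1 + 4 * I * t))).div
    (hasDerivAt_peregrine_denom_x x t) (peregrine_denom_ne_zero x t))).congr_deriv ?_
  ring

theorem hasDerivAt_deriv_peregrineProfile_x (x t : ℝ) :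
    HasDerivAt (deriv fun ξ => peregrineProfile ξ t)
      (32 * (1 + 4 * I * t) * (1 - 12 * (x : ℂ) ^ 2 + 16 * (t : ℂ) ^ 2)
        / (1 + 4 * (x : ℂ) ^ 2 + 16 * (t : ℂ) ^ 2) ^ 3) x := by
  rw [funext fun ξ => (hasDerivAt_peregrineProfile_x ξ t).deriv]
  have hD := peregrine_denom_ne_zero x t
  refine ((hasDerivAt_id (x : ℂ)).comp_ofReal.const_mul (32 * (1 + 4 * I * t))).div
    ((hasDerivAt_peregrine_denom_x x t).pow 2) (pow_ne_zero 2 hD) |>.congr_deriv ?_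
  simp only [mul_one, Pi.pow_apply, id_eq, Nat.cast_ofNat, Nat.add_one_sub_one, pow_one]
  field_simp
  ring

theorem hasDerivAt_peregrineProfile_t (x t : ℝ) :
    HasDerivAt (fun τ => peregrineProfile x τ)
      ((128 * (1 + 4 * I * t) * t - 16 * I * (1 + 4 * (x : ℂ) ^ 2 + 16 * (t : ℂ) ^ 2))
        / (1 + 4 * (x : ℂ) ^ 2 + 16 * (t : ℂ) ^ 2) ^ 2) t := by
  have hnum := ((((hasDerivAt_id (t : ℂ)).const_mul (4 * I)).const_add 1).const_mul 4).comp_ofReal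
  have hD := peregrine_denom_ne_zero x t
  refine (hasDerivAt_const t 1).sub (hnum.div (hasDerivAt_peregrine_denom_t x t) hD)
    |>.congr_deriv ?_
  simp only [mul_one, id_eq, zero_sub]
  field_simp
  ring

theorem peregrineProfile_sq_norm (x t : ℝ) :
    (‖peregrineProfile x t‖ : ℂ) ^ 2 = peregrineProfile x t *
      (1 - 4 * (1 - 4 * I * t) / (1 + 4 * (x : ℂ) ^ 2 + 16 * (t : ℂ) ^ 2)) := by
  rw [← mul_conj']
  congr 1
  simp [peregrineProfile, map_ofNat, sub_eq_add_neg]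

theorem nlsResidual_peregrineProfile (x t : ℝ) :
    nlsResidual peregrineProfile x t = 2 * peregrineProfile x t := by
  rw [nlsResidual, (hasDerivAt_peregrineProfile_t x t).deriv,
    (hasDerivAt_deriv_peregrineProfile_x x t).deriv, peregrineProfile_sq_norm, peregrineProfile]
  have hD := peregrine_denom_ne_zero x t
  -- `field_simp` would reorder the summands of `D` and no longer see that it is nonzero.
  generalize hDdef : 1 + 4 * (x : ℂ) ^ 2 + 16 * (t : ℂ) ^ 2 = D at *
  field_simp
  subst hDdef
  ring_nf
  simp only [I_sq, I_pow_three]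
  ring

end

/-- The Peregrine breather `u_Per(x,t) = (1 - 4(1+4it)/(1+4x²+16t²)) e^{2it}` solves the
focusing cubic NLS equation `i ∂ₜu + ∂ₓₓu + 2|u|²u = 0`. -/
theorem peregrine_solves_nls
    (uPer : ℝ → ℝ → ℂ)
    (hu : uPer = fun (x t : ℝ) =>
      (1 - 4 * (1 + 4 * Complex.I * (t : ℂ)) / (1 + 4 * (x : ℂ) ^ 2 + 16 * (t : ℂ) ^ 2))
        * Complex.exp (2 * Complex.I * t)) :
    ∀ x t : ℝ, Complex.I * deriv (fun τ => uPer x τ) t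
      + deriv (deriv (fun ξ => uPer ξ t)) x
      + 2 * ((‖uPer x t‖ : ℝ) : ℂ) ^ 2 * uPer x t = 0 := by
  intro x t
  have hphase : uPer = fun x t => peregrineProfile x t * exp (↑(2 * t) * I) := by
    rw [hu]; funext x t; congr 2; push_cast; ring
  have hv : DifferentiableAt ℝ (fun τ => peregrineProfile x τ) t :=
    (hasDerivAt_peregrineProfile_t x t).differentiableAt
  calc _ = nlsResidual uPer x t := rfl
    _ = (nlsResidual peregrineProfile x t - 2 * peregrineProfile x t) * exp (↑(2 * t) * I) := by
      rw [hphase, nlsResidual_mul_phase _ _ _ _ hv, ofReal_ofNat]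
    _ = 0 := by rw [nlsResidual_peregrineProfile, sub_self, zero_mul]
end

section
/- Let u_Per(x,t) := (1 − 4(1 + 4it)/(1 + 4x² + 16t²)) · exp(2it). Then for every t ∈ ℝ, the function x ↦ |∂ₓu_Per(x,t)|² − |u_Per(x,t)|² (|u_Per(x,t)|² − 1) is integrable on ℝ and the energy E(t) := (1/2) ∫_ℝ ( |∂ₓu_Per(x,t)|² − |u_Per(x,t)|² (|u_Per(x,t)|² − 1) ) dx equals 0. -/
/-!
Put `a = 1 + 16 t²` and `D = 4 x² + a`, the denominator of `u_Per`. Then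
`|u|² = 1 - 8/D + 16a/D²` and `|u_x|² = 1024 a x²/D⁴`, so the energy density is the rational
function `8/D - (16a + 64)/D² + 512a/D³ - 512a²/D⁴` of `x`. It is `O(1/D)`, hence integrable,
and it is the derivative of `F = -(8/3) (x/D) (3 - 8/D + 32a/D²)`, which vanishes at `±∞`.
-/

open MeasureTheory Filter Topology Bornology

section Rational

variable {a : ℝ}

noncomputable def peregrineEnergyDensity (a x : ℝ) : ℝ :=
  8 * (4 * x ^ 2 + a)⁻¹ - (16 * a + 64) * (4 * x ^ 2 + a)⁻¹ ^ 2
    + 512 * a * (4 * x ^ 2 + a)⁻¹ ^ 3 - 512 * a ^ 2 * (4 * x ^ 2 + a)⁻¹ ^ 4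

-- Found from `(x / D ^ k)' = (1 - 2k) / D ^ k + 2k a / D ^ (k + 1)`, a triangular system in `k`.
noncomputable def peregrineEnergyPrimitive (a x : ℝ) : ℝ :=
  -(8 / 3) * (x * (4 * x ^ 2 + a)⁻¹)
    * (3 - 8 * (4 * x ^ 2 + a)⁻¹ + 32 * a * (4 * x ^ 2 + a)⁻¹ ^ 2)

lemma hasDerivAt_inv_quadratic {x : ℝ} (hD : 4 * x ^ 2 + a ≠ 0) :
    HasDerivAt (fun x : ℝ => (4 * x ^ 2 + a)⁻¹) (-(8 * x) / (4 * x ^ 2 + a) ^ 2) x :=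
  ((((hasDerivAt_pow 2 x).const_mul 4).add_const a).inv hD).congr_deriv (by ring)

lemma hasDerivAt_peregrineEnergyPrimitive (ha : 0 < a) (x : ℝ) :
    HasDerivAt (peregrineEnergyPrimitive a) (peregrineEnergyDensity a x) x := by
  have hD : 4 * x ^ 2 + a ≠ 0 := by positivity
  have hs := hasDerivAt_inv_quadratic hD
  refine ((((hasDerivAt_id x).mul hs).const_mul (-(8 / 3))).mul
    (((hs.const_mul 8).const_sub 3).add ((hs.pow 2).const_mul (32 * a)))).congr_deriv ?_
  simp only [peregrineEnergyDensity, id, Pi.mul_apply, Pi.pow_apply, Pi.add_apply, Nat.cast_ofNat,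
    Nat.reduceSub, pow_one]
  field_simp
  ring

lemma tendsto_mul_inv_quadratic_cobounded (a : ℝ) :
    Tendsto (fun x : ℝ => x * (4 * x ^ 2 + a)⁻¹) (cobounded ℝ) (𝓝 0) := by
  have hinv : Tendsto (fun x : ℝ => x⁻¹) (cobounded ℝ) (𝓝 0) := tendsto_inv₀_cobounded
  have h := hinv.div ((hinv.pow 2).const_mul a |>.const_add 4) (by simp)
  rw [zero_div] at h
  refine h.congr' ?_
  filter_upwards [eventually_ne_cobounded 0] with x hx
  simp only [Pi.div_apply]
  field_simp

lemma tendsto_inv_quadratic_cobounded (a : ℝ) :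
    Tendsto (fun x : ℝ => (4 * x ^ 2 + a)⁻¹) (cobounded ℝ) (𝓝 0) := by
  have h := tendsto_inv₀_cobounded.mul (tendsto_mul_inv_quadratic_cobounded a)
  rw [zero_mul] at h
  refine h.congr' ?_
  filter_upwards [eventually_ne_cobounded 0] with x hx using inv_mul_cancel_left₀ hx _

lemma tendsto_peregrineEnergyPrimitive_cobounded (a : ℝ) :
    Tendsto (peregrineEnergyPrimitive a) (cobounded ℝ) (𝓝 0) := by
  have hs := tendsto_inv_quadratic_cobounded a
  have h := ((tendsto_mul_inv_quadratic_cobounded a).const_mul (-(8 / 3))).mul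
    (((tendsto_const_nhds (x := (3 : ℝ))).sub (hs.const_mul 8)).add
      ((hs.pow 2).const_mul (32 * a)))
  rw [mul_zero, zero_mul] at h
  exact h

lemma integrable_inv_quadratic (ha : 0 < a) : Integrable fun x : ℝ => (4 * x ^ 2 + a)⁻¹ := by
  have hc : 2 / √a ≠ 0 := by positivity
  refine ((integrable_inv_one_add_sq.comp_mul_left' hc).const_mul a⁻¹).congr
    (ae_of_all _ fun x => ?_)
  have : √a ^ 2 = a := Real.sq_sqrt ha.le
  field_simp
  rw [this]
  ring

lemma integrable_inv_quadratic_pow (ha : 0 < a) (n : ℕ) :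
    Integrable fun x : ℝ => (4 * x ^ 2 + a)⁻¹ ^ (n + 1) := by
  simp_rw [pow_succ _ n]
  refine (integrable_inv_quadratic ha).bdd_mul (c := a⁻¹ ^ n) (by fun_prop)
    (ae_of_all _ fun x => ?_)
  rw [norm_pow, Real.norm_of_nonneg (by positivity)]
  gcongr
  nlinarith [sq_nonneg x]

lemma integrable_peregrineEnergyDensity (ha : 0 < a) : Integrable (peregrineEnergyDensity a) :=
  ((((integrable_inv_quadratic ha).const_mul 8).sub
    ((integrable_inv_quadratic_pow ha 1).const_mul _)).add
    ((integrable_inv_quadratic_pow ha 2).const_mul _)).sub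
    ((integrable_inv_quadratic_pow ha 3).const_mul _)

lemma integral_peregrineEnergyDensity (ha : 0 < a) : ∫ x, peregrineEnergyDensity a x = 0 := by
  have h := tendsto_peregrineEnergyPrimitive_cobounded a
  simpa using integral_of_hasDerivAt_of_tendsto (hasDerivAt_peregrineEnergyPrimitive ha)
    (integrable_peregrineEnergyDensity ha) (h.mono_left IsOrderBornology.atBot_le_cobounded)
    (h.mono_left IsOrderBornology.atTop_le_cobounded)

end Rational

open Complex

noncomputable def peregrine (x t : ℝ) : ℂ :=
  (1 - 4 * (1 + 4 * I * t) / (1 + 4 * (x : ℂ) ^ 2 + 16 * (t : ℂ) ^ 2)) * exp (2 * I * t)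

lemma peregrine_eq_mul_inv (x t : ℝ) :
    peregrine x t = (1 - 4 * (1 + 4 * I * t) * ((4 * x ^ 2 + (1 + 16 * t ^ 2))⁻¹ : ℝ))
      * exp (2 * I * t) := by
  rw [peregrine]
  push_cast
  ring

lemma norm_exp_two_mul_I_mul (t : ℝ) : ‖exp (2 * I * t)‖ = 1 := by
  rw [show 2 * I * t = ((2 * t : ℝ) : ℂ) * I by push_cast; ring]
  exact norm_exp_ofReal_mul_I _

lemma sq_norm_peregrine (x t : ℝ) :
    ‖peregrine x t‖ ^ 2 = 1 - 8 * (4 * x ^ 2 + (1 + 16 * t ^ 2))⁻¹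
      + 16 * (1 + 16 * t ^ 2) * (4 * x ^ 2 + (1 + 16 * t ^ 2))⁻¹ ^ 2 := by
  set s := (4 * x ^ 2 + (1 + 16 * t ^ 2))⁻¹
  have h : 1 - 4 * (1 + 4 * I * t) * (s : ℂ)
      = ((1 - 4 * s : ℝ) : ℂ) + ((-16 * t * s : ℝ) : ℂ) * I := by
    push_cast
    ring
  rw [peregrine_eq_mul_inv, norm_mul, norm_exp_two_mul_I_mul, mul_one, h, Complex.sq_norm,
    normSq_add_mul_I]
  ring

lemma hasDerivAt_peregrine (x t : ℝ) :
    HasDerivAt (peregrine · t)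
      (-(4 * (1 + 4 * I * t) * ((-(8 * x) / (4 * x ^ 2 + (1 + 16 * t ^ 2)) ^ 2 : ℝ) : ℂ))
        * exp (2 * I * t)) x := by
  have hD : 4 * x ^ 2 + (1 + 16 * t ^ 2) ≠ 0 := by positivity
  simp only [peregrine_eq_mul_inv]
  exact ((((hasDerivAt_inv_quadratic hD).ofReal_comp).const_mul _).const_sub 1).mul_const _

lemma sq_norm_deriv_peregrine (x t : ℝ) :
    ‖deriv (peregrine · t) x‖ ^ 2
      = 1024 * (1 + 16 * t ^ 2) * x ^ 2 * (4 * x ^ 2 + (1 + 16 * t ^ 2))⁻¹ ^ 4 := by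
  have h : 4 * (1 + 4 * I * t) = ((4 : ℝ) : ℂ) + ((16 * t : ℝ) : ℂ) * I := by
    push_cast
    ring
  rw [(hasDerivAt_peregrine x t).deriv, norm_mul, norm_exp_two_mul_I_mul, mul_one, norm_neg,
    norm_mul, norm_real, h, mul_pow, Complex.sq_norm, normSq_add_mul_I, Real.norm_eq_abs, sq_abs]
  field_simp
  ring

lemma peregrine_energy_density_eq (x t : ℝ) :
    ‖deriv (peregrine · t) x‖ ^ 2 - ‖peregrine x t‖ ^ 2 * (‖peregrine x t‖ ^ 2 - 1)
      = peregrineEnergyDensity (1 + 16 * t ^ 2) x := by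
  have hD : 4 * x ^ 2 + (1 + 16 * t ^ 2) ≠ 0 := by positivity
  rw [sq_norm_deriv_peregrine, sq_norm_peregrine, peregrineEnergyDensity]
  field_simp
  ring

/-- The energy density of the Peregrine breather is integrable on `ℝ` and the energy
`E = (1/2)∫ (|u_x|² - |u|²(|u|² - 1)) dx` vanishes. -/
theorem peregrine_energy_zero
    (uPer : ℝ → ℝ → ℂ)
    (hu : uPer = fun (x t : ℝ) =>
      (1 - 4 * (1 + 4 * Complex.I * (t : ℂ)) / (1 + 4 * (x : ℂ) ^ 2 + 16 * (t : ℂ) ^ 2))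
        * Complex.exp (2 * Complex.I * t)) :
    ∀ t : ℝ,
      Integrable (fun x : ℝ =>
        ‖deriv (fun ξ => uPer ξ t) x‖ ^ 2
          - ‖uPer x t‖ ^ 2 * (‖uPer x t‖ ^ 2 - 1))
      ∧ (1 / 2) * (∫ x : ℝ,
          (‖deriv (fun ξ => uPer ξ t) x‖ ^ 2
            - ‖uPer x t‖ ^ 2 * (‖uPer x t‖ ^ 2 - 1))) = 0 := by
  obtain rfl : uPer = peregrine := hu
  intro t
  have ha : (0 : ℝ) < 1 + 16 * t ^ 2 := by positivity
  simp only [peregrine_energy_density_eq]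
  exact ⟨integrable_peregrineEnergyDensity ha,
    by rw [integral_peregrineEnergyDensity ha, mul_zero]⟩
end
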